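/- arXiv:2604.23517 — 3 statements merged into one kernel-verified Lean document; each statement's English description precedes it below -/
import Mathlib

section
/- Let g be the Dirichlet inverse of ω + 1 and C_Ω(n) = Ω(n)! ∏_{p^α || n} (1/α!). Then for every n ≥ 1, λ(n) g(n) = ∑_{d|n} C_Ω(d) μ²(n/d), where λ(n) = (-1)^{Ω(n)} is the Liouville function. -/
/-!
Write `χ` for the indicator function of `{1} ∪ {primes}`. Counting divisors gives `ω + 1 = ζ * χ`,
so `g = μ * χ⁻¹`. The multinomial recurrence `C_Ω(n) = ∑_{p ∣ n} C_Ω(n / p)` says exactly that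
`χ⁻¹ = λ · C_Ω`. Pointwise multiplication by the completely multiplicative `λ` distributes over
Dirichlet convolution, and `λ² = 1`, `λ μ = μ²`; hence `λ g = C_Ω * μ²`.
-/

open ArithmeticFunction Nat

/-- `C_Ω(n) = Ω(n)! / ∏_{p^α || n} α!`. -/
def COmega (n : ℕ) : ℕ :=
  (cardFactors n)! / ∏ p ∈ n.primeFactors, (n.factorization p)!

open scoped ArithmeticFunction.omega ArithmeticFunction.Moebius ArithmeticFunction.zeta

namespace Nat

variable {α : Type*} [DecidableEq α] {s : Finset α} {f : α → ℕ} {i : α}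

theorem prod_factorial_eq_mul_prod_factorial_update_pred (hi : i ∈ s) (hfi : f i ≠ 0) :
    ∏ j ∈ s, (f j)! = f i * ∏ j ∈ s, (Function.update f i (f i - 1) j)! := by
  rw [← Finset.mul_prod_erase s _ hi, ← Finset.mul_prod_erase s _ hi, ← mul_assoc,
    Function.update_self, Nat.mul_factorial_pred hfi]
  congr 1
  exact Finset.prod_congr rfl fun j hj => by rw [Function.update_of_ne (Finset.ne_of_mem_erase hj)]

theorem sum_update_pred (hi : i ∈ s) (hfi : f i ≠ 0) :
    ∑ j ∈ s, Function.update f i (f i - 1) j = ∑ j ∈ s, f j - 1 := by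
  rw [Finset.sum_update_of_mem hi, ← Finset.add_sum_erase s f hi, Finset.erase_eq]
  omega

theorem multinomial_eq_sum_multinomial_update_pred (hs : s.Nonempty) (hf : ∀ i ∈ s, f i ≠ 0) :
    multinomial s f = ∑ i ∈ s, multinomial s (Function.update f i (f i - 1)) := by
  have hsum : ∑ i ∈ s, f i ≠ 0 := by
    obtain ⟨i, hi⟩ := hs
    exact (Finset.sum_pos (fun j hj => Nat.pos_of_ne_zero (hf j hj)) ⟨i, hi⟩).ne'
  refine Nat.eq_of_mul_eq_mul_left (prod_factorial_pos s f) ?_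
  have hterm : ∀ i ∈ s, (∏ j ∈ s, (f j)!) * multinomial s (Function.update f i (f i - 1)) =
      f i * (∑ j ∈ s, f j - 1)! := by
    intro i hi
    rw [prod_factorial_eq_mul_prod_factorial_update_pred hi (hf i hi), mul_assoc,
      multinomial_spec, sum_update_pred hi (hf i hi)]
  rw [multinomial_spec, Finset.mul_sum, Finset.sum_congr rfl hterm, ← Finset.sum_mul,
    Nat.mul_factorial_pred hsum]

theorem factorization_div_prime {n p : ℕ} (hp : p.Prime) (hpn : p ∣ n) :
    (n / p).factorization = Function.update n.factorization p (n.factorization p - 1) := by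
  ext q
  rw [Nat.factorization_div hpn, hp.factorization, Finsupp.tsub_apply]
  rcases eq_or_ne q p with rfl | hq
  · simp
  · simp [hq]

end Nat

theorem COmega_eq_multinomial (n : ℕ) : COmega n = multinomial n.primeFactors n.factorization := by
  rw [COmega, multinomial, cardFactors_eq_sum_factorization, Finsupp.sum, Nat.support_factorization]

theorem COmega_eq_sum_COmega_div {n : ℕ} (hn : 1 < n) :
    COmega n = ∑ p ∈ n.primeFactors, COmega (n / p) := by
  have hn0 : n ≠ 0 := by omega
  rw [COmega_eq_multinomial, multinomial_eq_sum_multinomial_update_pred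
    (Nat.nonempty_primeFactors.2 hn) fun p hp =>
      Finsupp.mem_support_iff.1 (by rwa [Nat.support_factorization])]
  refine Finset.sum_congr rfl fun p hp => ?_
  obtain ⟨hpp, hpn, -⟩ := Nat.mem_primeFactors.1 hp
  rw [COmega_eq_multinomial, ← Nat.factorization_div_prime hpp hpn]
  refine (multinomial_congr_of_sdiff (Nat.primeFactors_mono (Nat.div_dvd_of_dvd hpn) hn0)
    (fun q hq => ?_) fun _ _ => rfl).symm
  exact Finsupp.notMem_support_iff.1
    (by rw [Nat.support_factorization]; exact (Finset.mem_sdiff.1 hq).2)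

namespace ArithmeticFunction

variable {R : Type*}

def ofFun [Zero R] (f : ℕ → R) : ArithmeticFunction R :=
  ⟨fun n => if n = 0 then 0 else f n, if_pos rfl⟩

theorem ofFun_apply [Zero R] (f : ℕ → R) {n : ℕ} (hn : n ≠ 0) : ofFun f n = f n :=
  if_neg hn

theorem ofFun_mul_apply [Semiring R] (f : ℕ → R) (g : ArithmeticFunction R) (n : ℕ) :
    (ofFun f * g) n = ∑ d ∈ n.divisors, f d * g (n / d) := by
  rw [mul_apply, Nat.sum_divisorsAntidiagonal fun d e => ofFun f d * g e]
  refine Finset.sum_congr rfl fun d hd => ?_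
  rw [ofFun_apply f (Nat.ne_of_gt (Nat.pos_of_mem_divisors hd))]

theorem mul_ofFun_apply [Semiring R] (f : ArithmeticFunction R) (g : ℕ → R) (n : ℕ) :
    (f * ofFun g) n = ∑ d ∈ n.divisors, f d * g (n / d) := by
  rw [mul_apply, Nat.sum_divisorsAntidiagonal fun d e => f d * ofFun g e]
  refine Finset.sum_congr rfl fun d hd => ?_
  rw [ofFun_apply g (Nat.div_pos (Nat.divisor_le hd) (Nat.pos_of_mem_divisors hd)).ne']

theorem pmul_mul_of_map_mul [CommSemiring R] {h : ArithmeticFunction R}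
    (hh : ∀ m n, h (m * n) = h m * h n) (f g : ArithmeticFunction R) :
    h.pmul (f * g) = h.pmul f * h.pmul g := by
  ext n
  simp only [pmul_apply, mul_apply, Finset.mul_sum]
  refine Finset.sum_congr rfl fun x hx => ?_
  rw [← (Nat.mem_divisorsAntidiagonal.1 hx).1, hh]
  ring

theorem liouville_pmul_liouville : liouville.pmul liouville = (ζ : ArithmeticFunction ℤ) := by
  ext n
  rcases eq_or_ne n 0 with rfl | hn
  · simp
  rw [pmul_apply, liouville_apply hn, natCoe_apply, zeta_apply_ne hn, ← pow_add, ← two_mul,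
    pow_mul, neg_one_sq, one_pow, Nat.cast_one]

theorem liouville_pmul_moebius : liouville.pmul μ = (μ : ArithmeticFunction ℤ).pmul μ := by
  ext n
  rw [pmul_apply, pmul_apply]
  by_cases hn : Squarefree n
  · rw [moebius_apply_of_squarefree hn, liouville_apply hn.ne_zero]
  · rw [moebius_eq_zero_of_not_squarefree hn, mul_zero, mul_zero]

theorem liouville_div_prime {n p : ℕ} (hp : p.Prime) (hpn : p ∣ n) :
    liouville (n / p) = -liouville n := by
  rw [← Nat.div_mul_cancel hpn, Nat.mul_div_cancel _ hp.pos, liouville_apply_mul,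
    liouville_apply hp.ne_zero, cardFactors_apply_prime hp]
  ring

def oneOrPrime : ArithmeticFunction ℤ :=
  ⟨fun n => if n = 1 ∨ n.Prime then 1 else 0, by simp [Nat.not_prime_zero]⟩

theorem oneOrPrime_mul_apply (f : ArithmeticFunction ℤ) {n : ℕ} (hn : n ≠ 0) :
    (oneOrPrime * f) n = f n + ∑ p ∈ n.primeFactors, f (n / p) := by
  have hsplit : ∀ d ∈ n.divisors, oneOrPrime d * f (n / d) =
      (if d = 1 then f (n / d) else 0) + (if d.Prime then f (n / d) else 0) := by
    intro d _
    by_cases h1 : d = 1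
    · simp [oneOrPrime, h1, Nat.not_prime_one]
    · by_cases hp : d.Prime <;> simp [oneOrPrime, h1, hp]
  rw [mul_apply, Nat.sum_divisorsAntidiagonal fun d e => oneOrPrime d * f e,
    Finset.sum_congr rfl hsplit, Finset.sum_add_distrib, Finset.sum_ite_eq',
    if_pos (Nat.one_mem_divisors.2 hn), Nat.div_one, ← Finset.sum_filter,
    ← Nat.primeFactors_eq_to_filter_divisors_prime]

theorem zeta_mul_oneOrPrime_apply {n : ℕ} (hn : n ≠ 0) :
    ((ζ : ArithmeticFunction ℤ) * oneOrPrime) n = ω n + 1 := by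
  have hω : ω n = n.primeFactors.card := by
    rw [cardDistinctFactors_apply, ← toFinset_factors, List.card_toFinset]
  rw [mul_comm, oneOrPrime_mul_apply _ hn, natCoe_apply, zeta_apply_ne hn,
    Finset.sum_congr rfl fun p hp => by
      rw [natCoe_apply, zeta_apply_ne (Nat.div_pos (Nat.le_of_mem_primeFactors hp)
        (Nat.prime_of_mem_primeFactors hp).pos).ne']]
  simp [hω, add_comm]

theorem oneOrPrime_mul_liouville_pmul_COmega :
    oneOrPrime * liouville.pmul (ofFun fun n => (COmega n : ℤ)) = 1 := by
  ext n
  rcases Nat.lt_trichotomy n 1 with hn | rfl | hn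
  · simp [Nat.lt_one_iff.1 hn]
  · rw [oneOrPrime_mul_apply _ one_ne_zero]
    simp [ofFun_apply, liouville_apply_one, COmega]
  have hn0 : n ≠ 0 := by omega
  have hterm : ∀ p ∈ n.primeFactors, liouville.pmul (ofFun fun n => (COmega n : ℤ)) (n / p) =
      -(liouville n * COmega (n / p)) := by
    intro p hp
    obtain ⟨hpp, hpn, -⟩ := Nat.mem_primeFactors.1 hp
    rw [pmul_apply, liouville_div_prime hpp hpn, ofFun_apply _
      (Nat.div_pos (Nat.le_of_dvd (by omega) hpn) hpp.pos).ne', neg_mul]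
  rw [oneOrPrime_mul_apply _ hn0, Finset.sum_congr rfl hterm, Finset.sum_neg_distrib,
    ← Finset.mul_sum, pmul_apply, ofFun_apply _ hn0, COmega_eq_sum_COmega_div hn,
    one_apply_ne hn.ne', Nat.cast_sum, add_neg_cancel]

theorem zeta_mul_oneOrPrime_mul_ofFun_eq_one {g : ℕ → ℤ} (hg1 : g 1 = 1)
    (hg : ∀ n : ℕ, 2 ≤ n → ∑ d ∈ n.divisors, ((ω d : ℤ) + 1) * g (n / d) = 0) :
    (ζ * oneOrPrime) * ofFun g = 1 := by
  ext n
  rcases Nat.lt_trichotomy n 1 with hn | rfl | hn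
  · simp [Nat.lt_one_iff.1 hn]
  · rw [mul_ofFun_apply, Nat.divisors_one, Finset.sum_singleton,
      zeta_mul_oneOrPrime_apply one_ne_zero]
    simp [hg1]
  · rw [mul_ofFun_apply, one_apply_ne hn.ne', ← hg n hn]
    exact Finset.sum_congr rfl fun d hd => by
      rw [zeta_mul_oneOrPrime_apply (Nat.pos_of_mem_divisors hd).ne']

end ArithmeticFunction

theorem liouville_mul_g_eq_sum_COmega_sq_moebius
    (g : ℕ → ℤ)
    (hg1 : g 1 = 1)
    (hg : ∀ n : ℕ, 2 ≤ n → ∑ d ∈ n.divisors, ((cardDistinctFactors d : ℤ) + 1) * g (n / d) = 0) :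
    ∀ n : ℕ, 1 ≤ n →
      (-1 : ℤ) ^ (cardFactors n) * g n =
        ∑ d ∈ n.divisors, (COmega d : ℤ) * (moebius (n / d)) ^ 2 := by
  have hg_inv := zeta_mul_oneOrPrime_mul_ofFun_eq_one hg1 hg
  have hCμ_inv : (ζ * oneOrPrime) * (μ * liouville.pmul (ofFun fun n => (COmega n : ℤ))) = 1 := by
    rw [mul_mul_mul_comm, coe_zeta_mul_moebius, oneOrPrime_mul_liouville_pmul_COmega, one_mul]
  have hg_eq : ofFun g = μ * liouville.pmul (ofFun fun n => (COmega n : ℤ)) :=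
    left_inv_eq_right_inv (by rwa [mul_comm] at hg_inv) hCμ_inv
  have hliouville_g : liouville.pmul (ofFun g) = (ofFun fun n => (COmega n : ℤ)) * pmul μ μ := by
    rw [hg_eq, pmul_mul_of_map_mul liouville_apply_mul, liouville_pmul_moebius, ← pmul_assoc,
      liouville_pmul_liouville, zeta_pmul, mul_comm]
  intro n hn
  have hn0 : n ≠ 0 := by omega
  have h := DFunLike.congr_fun hliouville_g n
  simp only [pmul_apply, liouville_apply hn0, ofFun_apply g hn0, ofFun_mul_apply, ← sq] at h
  exact h
end

section
/- Let g be the Dirichlet inverse of ω + 1. For every squarefree integer n ≥ 1, g(n) = (-1)^{ω(n)} ∑_{m=0}^{ω(n)} C(ω(n), m) · m!, where C(k,m) denotes the binomial coefficient. -/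
/-!
In the Dirichlet ring the pointwise `ω + 1` is `ω + ζ`. Since `ω = ζ * P` with `P` the indicator
function of the primes, the inverse of `ω + ζ = ζ * (1 + P)` is `μ * (1 + P)⁻¹`. On a squarefree
`n` with `k` prime factors, `(1 + P)⁻¹ n` is minus the sum of its values at the `k` numbers
`n / p`, hence equals `(-1) ^ k * k !`; summing this against `μ` over the `2 ^ k` divisors of `n`
gives `(-1) ^ k * ∑ m, k.choose m * m !`.
-/

open ArithmeticFunction Nat Finset
open scoped ArithmeticFunction.omega ArithmeticFunction.zeta ArithmeticFunction.Moebius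

namespace ArithmeticFunction

theorem cardDistinctFactors_eq_card_primeFactors (n : ℕ) : ω n = #n.primeFactors := by
  rw [cardDistinctFactors_apply, ← List.card_toFinset, toFinset_factors]

theorem cardDistinctFactors_prod_of_prime {s : Finset ℕ} (hs : ∀ p ∈ s, p.Prime) :
    ω (∏ p ∈ s, p) = #s := by
  rw [cardDistinctFactors_eq_card_primeFactors, primeFactors_prod hs]

theorem _root_.Squarefree.cardDistinctFactors_div {n d : ℕ} (hn : Squarefree n) (hd : d ∣ n) :
    ω (n / d) = ω n - ω d := by
  obtain ⟨e, rfl⟩ := hd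
  rcases Nat.eq_zero_or_pos d with rfl | hd
  · simp
  rw [Nat.mul_div_cancel_left e hd, cardDistinctFactors_mul (coprime_of_squarefree_mul hn)]
  omega

theorem moebius_apply_eq_neg_one_pow_cardDistinctFactors {n : ℕ} (hn : Squarefree n) :
    μ n = (-1) ^ ω n := by
  rw [moebius_apply_of_squarefree hn,
    (cardDistinctFactors_eq_cardFactors_iff_squarefree hn.ne_zero).2 hn]

theorem _root_.Squarefree.sum_divisors_apply_cardDistinctFactors {M : Type*} [AddCommMonoid M]
    {n : ℕ} (hn : Squarefree n) (f : ℕ → M) :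
    ∑ d ∈ n.divisors, f (ω d) = ∑ j ∈ range (ω n + 1), (ω n).choose j • f j := by
  rw [← divisors_filter_squarefree_of_squarefree hn, sum_divisors_filter_squarefree hn.ne_zero,
    factors_eq, List.toFinset_coe, toFinset_factors, cardDistinctFactors_eq_card_primeFactors n,
    ← sum_powerset_apply_card]
  refine sum_congr rfl fun t ht => ?_
  rw [prod_val]
  exact congrArg f <| cardDistinctFactors_prod_of_prime
    fun p hp => prime_of_mem_primeFactors (mem_powerset.1 ht hp)

def primeIndicator (R : Type*) [Zero R] [One R] : ArithmeticFunction R :=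
  ⟨fun n => if n.Prime then 1 else 0, by simp [Nat.not_prime_zero]⟩

variable {R : Type*}

@[simp]
theorem primeIndicator_apply [Zero R] [One R] (n : ℕ) :
    primeIndicator R n = if n.Prime then 1 else 0 := rfl

theorem primeIndicator_mul_apply [Semiring R] (f : ArithmeticFunction R) (n : ℕ) :
    (primeIndicator R * f) n = ∑ p ∈ n.primeFactors, f (n / p) := by
  rw [mul_apply, sum_divisorsAntidiagonal fun a b => primeIndicator R a * f b]
  simp only [primeIndicator_apply, ite_mul, one_mul, zero_mul, ← sum_filter]
  congr 1
  ext p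
  simp [and_comm]

theorem coe_zeta_mul_primeIndicator [Semiring R] :
    (ζ * primeIndicator R : ArithmeticFunction R) = ω := by
  ext n
  rw [coe_zeta_mul_apply, natCoe_apply, cardDistinctFactors_eq_card_primeFactors]
  simp only [primeIndicator_apply, sum_ite, sum_const_zero, add_zero, sum_const, nsmul_one]
  congr 2
  ext p
  simp [and_comm]

section CommRing

variable [CommRing R]

theorem apply_of_one_add_primeIndicator_mul_eq_one {H : ArithmeticFunction R}
    (hH : (1 + primeIndicator R) * H = 1) {n : ℕ} (hn : Squarefree n) :
    H n = (-1) ^ ω n * (ω n)! := by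
  induction n using Nat.strong_induction_on with
  | _ n ih =>
  have hrec : H n + ∑ p ∈ n.primeFactors, H (n / p) = (1 : ArithmeticFunction R) n := by
    rw [← hH, add_mul, one_mul, ArithmeticFunction.add_apply, primeIndicator_mul_apply]
  rcases eq_or_ne n 1 with rfl | hn1
  · simpa using hrec
  have hdiv : ∀ p ∈ n.primeFactors, H (n / p) = (-1) ^ (ω n - 1) * (ω n - 1)! := by
    intro p hp
    have hpn := dvd_of_mem_primeFactors hp
    rw [ih (n / p) (div_lt_self hn.ne_zero.bot_lt (prime_of_mem_primeFactors hp).one_lt)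
      (hn.squarefree_of_dvd (div_dvd_of_dvd hpn)), hn.cardDistinctFactors_div hpn,
      cardDistinctFactors_apply_prime (prime_of_mem_primeFactors hp)]
  rw [sum_congr rfl hdiv, sum_const, ← cardDistinctFactors_eq_card_primeFactors,
    one_apply_ne hn1, nsmul_eq_mul] at hrec
  obtain ⟨k, hk⟩ : ∃ k, ω n = k + 1 :=
    exists_eq_add_one.2 (cardDistinctFactors_pos.2 (by have := hn.ne_zero; omega))
  rw [hk, add_tsub_cancel_right] at hrec
  rw [hk, factorial_succ]
  push_cast at hrec ⊢
  linear_combination hrec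

theorem mul_moebius_apply_of_squarefree {H : ArithmeticFunction R}
    (hH : ∀ d, Squarefree d → H d = (-1) ^ ω d * (ω d)!) {n : ℕ} (hn : Squarefree n) :
    (H * μ) n = (-1) ^ ω n * ∑ m ∈ range (ω n + 1), ((ω n).choose m : R) * m ! := by
  have hterm : ∀ d ∈ n.divisors, H d * (μ : ArithmeticFunction R) (n / d)
      = (-1) ^ ω n * (ω d)! := by
    intro d hd
    have hdn := dvd_of_mem_divisors hd
    have hle : ω d ≤ ω n := by
      simpa only [cardDistinctFactors_eq_card_primeFactors]
        using card_le_card (primeFactors_mono hdn hn.ne_zero)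
    rw [hH d (hn.squarefree_of_dvd hdn), intCoe_apply,
      moebius_apply_eq_neg_one_pow_cardDistinctFactors
        (hn.squarefree_of_dvd (div_dvd_of_dvd hdn)),
      hn.cardDistinctFactors_div hdn]
    push_cast
    rw [mul_right_comm, ← pow_add, Nat.add_sub_cancel' hle]
  rw [mul_apply, sum_divisorsAntidiagonal fun a b => H a * (μ : ArithmeticFunction R) b,
    sum_congr rfl hterm, hn.sum_divisors_apply_cardDistinctFactors fun j => (-1) ^ ω n * (j ! : R),
    mul_sum]
  simp only [nsmul_eq_mul, mul_left_comm]

theorem apply_of_coe_cardDistinctFactors_add_zeta_mul_eq_one {G : ArithmeticFunction R}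
    (hG : (ω + ζ : ArithmeticFunction R) * G = 1) {n : ℕ} (hn : Squarefree n) :
    G n = (-1) ^ ω n * ∑ m ∈ range (ω n + 1), ((ω n).choose m : R) * m ! := by
  have hH : (1 + primeIndicator R) * (ζ * G) = 1 := by
    rw [← mul_assoc, mul_comm (1 + primeIndicator R), mul_add, mul_one,
      coe_zeta_mul_primeIndicator, add_comm, hG]
  have hG' : G = ζ * G * μ := by
    rw [mul_comm (ζ * G : ArithmeticFunction R), ← mul_assoc, coe_moebius_mul_coe_zeta, one_mul]
  rw [hG']
  exact mul_moebius_apply_of_squarefree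
    (fun _ hd => apply_of_one_add_primeIndicator_mul_eq_one hH hd) hn

end CommRing

end ArithmeticFunction

theorem g_on_squarefree
    (g : ℕ → ℤ)
    (hg1 : g 1 = 1)
    (hg : ∀ n : ℕ, 2 ≤ n → ∑ d ∈ n.divisors, ((cardDistinctFactors d : ℤ) + 1) * g (n / d) = 0) :
    ∀ n : ℕ, 1 ≤ n → Squarefree n →
      g n = (-1 : ℤ) ^ (cardDistinctFactors n) *
        ∑ m ∈ range (cardDistinctFactors n + 1),
          ((cardDistinctFactors n).choose m : ℤ) * (m ! : ℤ) := by
  intro n _ hn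
  let G : ArithmeticFunction ℤ := ⟨fun m => if m = 0 then 0 else g m, if_pos rfl⟩
  have hG : (ω + ζ : ArithmeticFunction ℤ) * G = 1 := by
    ext m
    rcases Nat.lt_trichotomy m 1 with hm | rfl | hm
    · simp [Nat.lt_one_iff.1 hm]
    · rw [mul_apply_one]
      simp [G, hg1]
    rw [one_apply_ne hm.ne', mul_apply,
      sum_divisorsAntidiagonal fun a b => (ω + ζ : ArithmeticFunction ℤ) a * G b, ← hg m hm]
    refine sum_congr rfl fun d hd => ?_
    have hdm := dvd_of_mem_divisors hd
    simp [G, pos_of_mem_divisors hd |>.ne', Nat.le_of_dvd (by omega) hdm]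
  simpa [G, hn.ne_zero] using apply_of_coe_cardDistinctFactors_add_zeta_mul_eq_one hG hn
end

section
/- Let g be the Dirichlet inverse of ω + 1, G(x) = ∑_{n ≤ x} g(n), and M(x) = ∑_{n ≤ x} μ(n). Then for every real x ≥ 1, M(x) = G(x) + ∑_{p ≤ x, p prime} G(⌊x/p⌋). -/
/-!
Write `χ` for the indicator of `{1} ∪ {primes}`. Summing `χ` over the divisors of `n ≥ 1` counts
`1` and the prime factors of `n`, so `ζ * χ = ω + 1`. Multiplying `μ * ζ = 1` by `χ * g` gives
`μ = μ * (ζ * χ) * g = χ * g`. Interchanging summation,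
`∑_{n ≤ N} (χ * g) n = ∑_{d ≤ N} χ d ∑_{m ≤ N / d} g m`, and only the terms `d = 1` and `d = p`
prime survive.
-/

open ArithmeticFunction Finset
open scoped ArithmeticFunction.omega ArithmeticFunction.Moebius ArithmeticFunction.zeta

namespace ArithmeticFunction

variable {R : Type*}

def extendByZero [Zero R] (g : ℕ → R) : ArithmeticFunction R :=
  ⟨fun n => if n = 0 then 0 else g n, if_pos rfl⟩

theorem extendByZero_apply [Zero R] (g : ℕ → R) {n : ℕ} (hn : n ≠ 0) :
    extendByZero g n = g n :=
  if_neg hn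

theorem mul_eq_one_of_sum_divisors [Semiring R] (f g : ArithmeticFunction R)
    (h1 : f 1 * g 1 = 1) (h : ∀ n : ℕ, 2 ≤ n → ∑ d ∈ n.divisors, f d * g (n / d) = 0) :
    f * g = 1 := by
  ext n
  rcases lt_or_ge n 2 with hn | hn
  · interval_cases n <;> simp [h1]
  · rw [mul_apply, Nat.sum_divisorsAntidiagonal (fun a b => f a * g b), h n hn,
      one_apply_ne (by omega)]

theorem coe_moebius_eq_mul_of_coe_zeta_mul_mul_eq_one [Ring R] {χ g : ArithmeticFunction R}
    (h : (ζ * χ) * g = 1) : (μ : ArithmeticFunction R) = χ * g :=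
  calc (μ : ArithmeticFunction R) = μ * ((ζ * χ) * g) := by rw [h, mul_one]
    _ = (μ * ζ) * χ * g := by simp only [mul_assoc]
    _ = χ * g := by rw [coe_moebius_mul_coe_zeta, one_mul]

def oneOrPrimeIndicator : ArithmeticFunction ℤ :=
  ⟨fun n => if n = 1 ∨ n.Prime then 1 else 0, by simp [Nat.not_prime_zero]⟩

theorem oneOrPrimeIndicator_apply (n : ℕ) :
    oneOrPrimeIndicator n = if n = 1 ∨ n.Prime then 1 else 0 :=
  rfl

theorem coe_zeta_mul_oneOrPrimeIndicator_apply {n : ℕ} (hn : n ≠ 0) :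
    (ζ * oneOrPrimeIndicator) n = (ω n : ℤ) + 1 := by
  have hdivisors : n.divisors.filter (fun d => d = 1 ∨ d.Prime) = insert 1 n.primeFactors := by
    ext d
    simp only [mem_filter, Nat.mem_divisors, mem_insert, Nat.mem_primeFactors]
    constructor
    · rintro ⟨⟨hd, _⟩, rfl | hp⟩
      exacts [Or.inl rfl, Or.inr ⟨hp, hd, hn⟩]
    · rintro (rfl | ⟨hp, hd, _⟩)
      exacts [⟨⟨one_dvd n, hn⟩, Or.inl rfl⟩, ⟨⟨hd, hn⟩, Or.inr hp⟩]
  rw [coe_zeta_mul_apply]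
  simp only [oneOrPrimeIndicator_apply]
  rw [sum_boole, hdivisors, card_insert_of_notMem (by simp [Nat.not_prime_one]),
    cardDistinctFactors_apply, ← Nat.toFinset_factors, List.card_toFinset]
  push_cast
  ring

theorem coe_zeta_mul_oneOrPrimeIndicator_mul_extendByZero_eq_one {g : ℕ → ℤ} (hg1 : g 1 = 1)
    (hg : ∀ n : ℕ, 2 ≤ n → ∑ d ∈ n.divisors, ((ω d : ℤ) + 1) * g (n / d) = 0) :
    (ζ * oneOrPrimeIndicator) * extendByZero g = 1 := by
  refine mul_eq_one_of_sum_divisors _ _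
    (by simp [oneOrPrimeIndicator_apply, extendByZero_apply, hg1]) fun n hn => ?_
  rw [← hg n hn]
  refine sum_congr rfl fun d hd => ?_
  obtain ⟨hdn, hn0⟩ := Nat.mem_divisors.mp hd
  have hd0 : d ≠ 0 := ne_zero_of_dvd_ne_zero hn0 hdn
  have hnd0 : n / d ≠ 0 := (Nat.div_ne_zero_iff_of_dvd hdn).mpr ⟨hn0, hd0⟩
  rw [coe_zeta_mul_oneOrPrimeIndicator_apply hd0, extendByZero_apply g hnd0]

theorem sum_Ioc_oneOrPrimeIndicator_mul (f : ArithmeticFunction ℤ) {N : ℕ} (hN : 1 ≤ N) :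
    ∑ n ∈ Ioc 0 N, (oneOrPrimeIndicator * f) n =
      ∑ m ∈ Ioc 0 N, f m + ∑ p ∈ Ioc 0 N with p.Prime, ∑ m ∈ Ioc 0 (N / p), f m := by
  have hsupport : (Ioc 0 N).filter (fun d => d = 1 ∨ d.Prime)
      = insert 1 ((Ioc 0 N).filter Nat.Prime) := by
    ext d
    simp only [mem_filter, mem_insert, mem_Ioc]
    constructor
    · rintro ⟨hd, rfl | hp⟩
      exacts [Or.inl rfl, Or.inr ⟨hd, hp⟩]
    · rintro (rfl | ⟨hd, hp⟩)
      exacts [⟨⟨one_pos, hN⟩, Or.inl rfl⟩, ⟨hd, Or.inr hp⟩]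
  simp only [sum_Ioc_mul_eq_sum_sum, oneOrPrimeIndicator_apply, ite_mul, one_mul, zero_mul]
  rw [← sum_filter, hsupport, sum_insert (by simp [Nat.not_prime_one]), Nat.div_one]

end ArithmeticFunction

theorem mertens_eq_G_add_sum_primes_G
    (g : ℕ → ℤ)
    (hg1 : g 1 = 1)
    (hg : ∀ n : ℕ, 2 ≤ n → ∑ d ∈ n.divisors, ((cardDistinctFactors d : ℤ) + 1) * g (n / d) = 0)
    (G : ℝ → ℤ)
    (hG : ∀ y : ℝ, G y = ∑ n ∈ Icc 1 ⌊y⌋₊, g n) :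
    ∀ x : ℝ, 1 ≤ x →
      ∑ n ∈ Icc 1 ⌊x⌋₊, moebius n =
        G x + ∑ p ∈ (Icc 1 ⌊x⌋₊).filter Nat.Prime, G ((⌊x / (p : ℝ)⌋₊ : ℝ)) := by
  intro x hx
  have hIcc (N : ℕ) : Icc 1 N = Ioc 0 N := Icc_add_one_left_eq_Ioc 0 N
  have hsum (N : ℕ) : ∑ m ∈ Ioc 0 N, extendByZero g m = ∑ m ∈ Icc 1 N, g m := by
    rw [hIcc]
    exact sum_congr rfl fun m hm => extendByZero_apply g (mem_Ioc.mp hm).1.ne'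
  have hμ : μ = oneOrPrimeIndicator * extendByZero g := by
    simpa using coe_moebius_eq_mul_of_coe_zeta_mul_mul_eq_one
      (coe_zeta_mul_oneOrPrimeIndicator_mul_extendByZero_eq_one hg1 hg)
  rw [hIcc, hμ, sum_Ioc_oneOrPrimeIndicator_mul _ (Nat.one_le_floor_iff x |>.mpr hx), hsum, ← hG]
  simp only [hG, hsum, Nat.floor_natCast, Nat.floor_div_natCast]
end
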